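/- arXiv:1710.08165 — 2 statements merged into one kernel-verified Lean document; each statement's English description precedes it below -/
import Mathlib

section
/- (Lemma 10, slackness varies slowly in the Vaidya local norm) For all points x, y in the interior of K and every i ∈ [m], one has |1 − s_{y,i}/s_{x,i}| ≤ (m/d)^{1/4} · ‖x − y‖_{V_x}. -/
open Matrix MeasureTheory Real Set
open scoped ENNReal

noncomputable section

namespace PolytopeWalks

/-- Slackness `s_{x,i} = b_i − a_i^⊤ x`. -/
def slack {d m : ℕ} (A : Matrix (Fin m) (Fin d) ℝ) (b : Fin m → ℝ) (x : Fin d → ℝ)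
    (i : Fin m) : ℝ :=
  b i - A.mulVec x i

/-- The polytope `K = {x : A x ≤ b}`. -/
def poly {d m : ℕ} (A : Matrix (Fin m) (Fin d) ℝ) (b : Fin m → ℝ) : Set (Fin d → ℝ) :=
  {x | ∀ i, A.mulVec x i ≤ b i}

/-- The interior of the polytope: all slacks positive. -/
def interiorPoly {d m : ℕ} (A : Matrix (Fin m) (Fin d) ℝ) (b : Fin m → ℝ) :
    Set (Fin d → ℝ) :=
  {x | ∀ i, 0 < slack A b x i}

/-- Hessian of the logarithmic barrier, `∇²F_x = Σ_i a_i a_i^⊤ / s_{x,i}²`. -/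
def logHess {d m : ℕ} (A : Matrix (Fin m) (Fin d) ℝ) (b : Fin m → ℝ) (x : Fin d → ℝ) :
    Matrix (Fin d) (Fin d) ℝ :=
  ∑ i : Fin m, ((slack A b x i) ^ 2)⁻¹ • vecMulVec (A i) (A i)

/-- Leverage scores `σ_{x,i} = a_i^⊤ (∇²F_x)⁻¹ a_i / s_{x,i}²`. -/
def lev {d m : ℕ} (A : Matrix (Fin m) (Fin d) ℝ) (b : Fin m → ℝ) (x : Fin d → ℝ)
    (i : Fin m) : ℝ :=
  (A i) ⬝ᵥ ((logHess A b x)⁻¹ *ᵥ (A i)) / (slack A b x i) ^ 2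

/-- The Vaidya matrix `V_x = Σ_i (σ_{x,i} + d/m) a_i a_i^⊤ / s_{x,i}²`. -/
def vaidyaMat {d m : ℕ} (A : Matrix (Fin m) (Fin d) ℝ) (b : Fin m → ℝ) (x : Fin d → ℝ) :
    Matrix (Fin d) (Fin d) ℝ :=
  ∑ i : Fin m, ((lev A b x i + (d : ℝ) / m) / (slack A b x i) ^ 2) • vecMulVec (A i) (A i)

/-- Vaidya local norm `‖v‖_{V_x} = (v^⊤ V_x v)^{1/2}`. -/
def vNorm {d m : ℕ} (A : Matrix (Fin m) (Fin d) ℝ) (b : Fin m → ℝ) (x v : Fin d → ℝ) : ℝ :=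
  Real.sqrt (v ⬝ᵥ (vaidyaMat A b x *ᵥ v))

/-- Vaidya slack sensitivities `θ_{x,i} = a_i^⊤ V_x⁻¹ a_i / s_{x,i}²`. -/
def thetaV {d m : ℕ} (A : Matrix (Fin m) (Fin d) ℝ) (b : Fin m → ℝ) (x : Fin d → ℝ)
    (i : Fin m) : ℝ :=
  (A i) ⬝ᵥ ((vaidyaMat A b x)⁻¹ *ᵥ (A i)) / (slack A b x i) ^ 2

/-!
Write `v = x - y`, `β = d/m` and `θ_i = a_iᵀ V_x⁻¹ a_i / s_{x,i}²`. Since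
`1 - s_{y,i}/s_{x,i} = -a_iᵀ v / s_{x,i}`, Cauchy–Schwarz in the geometry of `V_x` bounds the
left-hand side by `√θ_i ‖v‖_{V_x}`, so it suffices to show `θ_i ≤ √(m/d)`. The `i`-th summand of
`V_x` gives `(σ_i + β) θ_i ≤ 1`, and `β ∇²F_x ≤ V_x` gives `β θ_i ≤ σ_i`; together they force
`β θ_i² ≤ 1`.
-/

end PolytopeWalks

namespace Matrix

variable {ι n : Type*}

theorem mulVec_injective_of_rank_eq_card [Fintype n] {K : Type*} [Field K] {A : Matrix ι n K}
    (h : A.rank = Fintype.card n) : Function.Injective A.mulVec := by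
  have := LinearMap.finrank_range_add_finrank_ker A.mulVecLin
  rwa [← rank, h, Module.finrank_fintype_fun_eq_card, add_eq_left,
    Submodule.finrank_eq_zero, LinearMap.ker_eq_bot] at this

variable [Fintype ι]

theorem sum_smul_vecMulVec_eq_transpose_mul_diagonal_mul [DecidableEq ι] (c : ι → ℝ)
    (A : Matrix ι n ℝ) : ∑ i, c i • vecMulVec (A i) (A i) = Aᵀ * diagonal c * A := by
  ext j k
  simp [sum_apply, mul_apply, vecMulVec_apply, diagonal_apply, mul_comm, mul_left_comm]

variable [Fintype n]

theorem dotProduct_sum_smul_vecMulVec_mulVec (c : ι → ℝ) (A : Matrix ι n ℝ) (u v : n → ℝ) :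
    u ⬝ᵥ ((∑ i, c i • vecMulVec (A i) (A i)) *ᵥ v) = ∑ i, c i * (A i ⬝ᵥ u) * (A i ⬝ᵥ v) := by
  rw [sum_mulVec, dotProduct_sum]
  refine Finset.sum_congr rfl fun i _ => ?_
  simp only [smul_mulVec, vecMulVec_mulVec, op_smul_eq_smul, smul_dotProduct, smul_eq_mul,
    dotProduct_comm u]
  ring

theorem posDef_sum_smul_vecMulVec {c : ι → ℝ} (hc : ∀ i, 0 < c i) {A : Matrix ι n ℝ}
    (hA : Function.Injective A.mulVec) : (∑ i, c i • vecMulVec (A i) (A i)).PosDef := by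
  classical
  rw [sum_smul_vecMulVec_eq_transpose_mul_diagonal_mul, ← conjTranspose_eq_transpose_of_trivial]
  exact (PosDef.diagonal hc).conjTranspose_mul_mul_same hA

theorem PosSemidef.sq_dotProduct_mulVec_le {M : Matrix n n ℝ} (hM : M.PosSemidef)
    (u v : n → ℝ) : (u ⬝ᵥ (M *ᵥ v)) ^ 2 ≤ (u ⬝ᵥ (M *ᵥ u)) * (v ⬝ᵥ (M *ᵥ v)) := by
  let _ := M.toSeminormedAddCommGroup hM
  let _ := M.toInnerProductSpace hM
  have h : ((M *ᵥ v) ⬝ᵥ u) * ((M *ᵥ v) ⬝ᵥ u) ≤ ((M *ᵥ u) ⬝ᵥ u) * ((M *ᵥ v) ⬝ᵥ v) :=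
    real_inner_mul_inner_self_le u v
  simpa only [sq, dotProduct_comm] using h

theorem PosDef.sq_dotProduct_le [DecidableEq n] {M : Matrix n n ℝ} (hM : M.PosDef)
    (a v : n → ℝ) : (a ⬝ᵥ v) ^ 2 ≤ (a ⬝ᵥ (M⁻¹ *ᵥ a)) * (v ⬝ᵥ (M *ᵥ v)) := by
  have hMu : M *ᵥ (M⁻¹ *ᵥ a) = a := by
    rw [mulVec_mulVec, mul_nonsing_inv _ ((isUnit_iff_isUnit_det M).mp hM.isUnit), one_mulVec]
  have hsymm : Mᵀ = M := by simpa using hM.isHermitian.eq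
  have h := hM.posSemidef.sq_dotProduct_mulVec_le (M⁻¹ *ᵥ a) v
  rwa [hMu, dotProduct_comm _ a, dotProduct_mulVec, ← mulVec_transpose, hsymm, hMu] at h

/-- Leverage scores of a weighted Gram matrix are at most `1`. -/
theorem mul_dotProduct_inv_sum_smul_vecMulVec_le_one [DecidableEq n] {c : ι → ℝ}
    (hc : ∀ i, 0 ≤ c i) (A : Matrix ι n ℝ) (hM : IsUnit (∑ j, c j • vecMulVec (A j) (A j)).det)
    (i : ι) : c i * (A i ⬝ᵥ ((∑ j, c j • vecMulVec (A j) (A j))⁻¹ *ᵥ A i)) ≤ 1 := by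
  set M := ∑ j, c j • vecMulVec (A j) (A j)
  set w := M⁻¹ *ᵥ A i
  have hMw : M *ᵥ w = A i := by rw [mulVec_mulVec, mul_nonsing_inv _ hM, one_mulVec]
  have hT : A i ⬝ᵥ w = ∑ j, c j * (A j ⬝ᵥ w) * (A j ⬝ᵥ w) := by
    rw [← dotProduct_sum_smul_vecMulVec_mulVec, hMw, dotProduct_comm]
  have hterm_nonneg : ∀ j, 0 ≤ c j * (A j ⬝ᵥ w) * (A j ⬝ᵥ w) := fun j => by
    rw [mul_assoc]; exact mul_nonneg (hc j) (mul_self_nonneg _)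
  have hT_nonneg : 0 ≤ A i ⬝ᵥ w := hT ▸ Finset.sum_nonneg fun j _ => hterm_nonneg j
  have hsingle : c i * (A i ⬝ᵥ w) * (A i ⬝ᵥ w) ≤ A i ⬝ᵥ w :=
    hT ▸ Finset.single_le_sum (fun j _ => hterm_nonneg j) (Finset.mem_univ i)
  rcases hT_nonneg.eq_or_lt with hT0 | hTpos
  · rw [← hT0]; simp
  · exact le_of_mul_le_mul_right (by linarith) hTpos

/-- Inversion reverses the Loewner order: `β • H ≤ M` gives `β • M⁻¹ ≤ H⁻¹`, tested on `a`. -/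
theorem PosDef.mul_dotProduct_inv_mulVec_le [DecidableEq n] {H M : Matrix n n ℝ}
    (hH : H.PosDef) (hM : IsUnit M.det) {β : ℝ} (hβ : 0 ≤ β)
    (hle : ∀ w, β * (w ⬝ᵥ (H *ᵥ w)) ≤ w ⬝ᵥ (M *ᵥ w)) (a : n → ℝ) :
    β * (a ⬝ᵥ (M⁻¹ *ᵥ a)) ≤ a ⬝ᵥ (H⁻¹ *ᵥ a) := by
  set w := M⁻¹ *ᵥ a
  have hT : a ⬝ᵥ w = w ⬝ᵥ (M *ᵥ w) := by
    rw [mulVec_mulVec, mul_nonsing_inv _ hM, one_mulVec, dotProduct_comm]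
  have hHw : 0 ≤ w ⬝ᵥ (H *ᵥ w) := by simpa using hH.posSemidef.dotProduct_mulVec_nonneg w
  have hHa : 0 ≤ a ⬝ᵥ (H⁻¹ *ᵥ a) := by simpa using hH.inv.posSemidef.dotProduct_mulVec_nonneg a
  have hβT : β * (w ⬝ᵥ (H *ᵥ w)) ≤ a ⬝ᵥ w := hT ▸ hle w
  have key : β * (a ⬝ᵥ w) * (a ⬝ᵥ w) ≤ (a ⬝ᵥ (H⁻¹ *ᵥ a)) * (a ⬝ᵥ w) :=
    calc β * (a ⬝ᵥ w) * (a ⬝ᵥ w) ≤ β * ((a ⬝ᵥ (H⁻¹ *ᵥ a)) * (w ⬝ᵥ (H *ᵥ w))) := by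
          rw [mul_assoc, ← sq]; exact mul_le_mul_of_nonneg_left (hH.sq_dotProduct_le a w) hβ
      _ = (a ⬝ᵥ (H⁻¹ *ᵥ a)) * (β * (w ⬝ᵥ (H *ᵥ w))) := by ring
      _ ≤ (a ⬝ᵥ (H⁻¹ *ᵥ a)) * (a ⬝ᵥ w) := mul_le_mul_of_nonneg_left hβT hHa
  rcases (mul_nonneg hβ hHw |>.trans hβT).eq_or_lt with hT0 | hTpos
  · rw [← hT0, mul_zero]; exact hHa
  · exact le_of_mul_le_mul_right key hTpos

end Matrix

theorem le_sqrt_inv_of_add_mul_le_one {σ β θ : ℝ} (hβ : 0 < β) (hθ : 0 ≤ θ)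
    (h₁ : (σ + β) * θ ≤ 1) (h₂ : β * θ ≤ σ) : θ ≤ √β⁻¹ := by
  rw [Real.le_sqrt hθ (by positivity), ← one_div, le_div_iff₀ hβ]
  nlinarith [mul_le_mul_of_nonneg_right h₂ hθ, mul_nonneg hβ.le hθ]

namespace PolytopeWalks

theorem slack_sub_slack {d m : ℕ} (A : Matrix (Fin m) (Fin d) ℝ) (b : Fin m → ℝ) (x y : Fin d → ℝ)
    (i : Fin m) : slack A b x i - slack A b y i = -(A i ⬝ᵥ (x - y)) := by
  simp only [slack, mulVec, dotProduct_sub]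
  ring

variable {d m : ℕ} {A : Matrix (Fin m) (Fin d) ℝ} {b : Fin m → ℝ} {x : Fin d → ℝ}

theorem logHess_posDef (hx : x ∈ interiorPoly A b) (hA : A.rank = d) :
    (logHess A b x).PosDef :=
  posDef_sum_smul_vecMulVec (fun i => by have := hx i; positivity)
    (mulVec_injective_of_rank_eq_card (by simpa using hA))

theorem lev_nonneg (hx : x ∈ interiorPoly A b) (hA : A.rank = d) (i : Fin m) :
    0 ≤ lev A b x i :=
  div_nonneg
    (by simpa using (logHess_posDef hx hA).inv.posSemidef.dotProduct_mulVec_nonneg (A i))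
    (sq_nonneg _)

theorem vaidyaMat_posDef (hβ : 0 < (d : ℝ) / m) (hx : x ∈ interiorPoly A b)
    (hA : A.rank = d) : (vaidyaMat A b x).PosDef :=
  posDef_sum_smul_vecMulVec
    (fun i => div_pos (add_pos_of_nonneg_of_pos (lev_nonneg hx hA i) hβ) (pow_pos (hx i) 2))
    (mulVec_injective_of_rank_eq_card (by simpa using hA))

theorem thetaV_nonneg (hβ : 0 < (d : ℝ) / m) (hx : x ∈ interiorPoly A b) (hA : A.rank = d)
    (i : Fin m) : 0 ≤ thetaV A b x i :=
  div_nonneg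
    (by simpa using (vaidyaMat_posDef hβ hx hA).inv.posSemidef.dotProduct_mulVec_nonneg (A i))
    (sq_nonneg _)

theorem lev_add_mul_thetaV_le_one (hβ : 0 < (d : ℝ) / m) (hx : x ∈ interiorPoly A b)
    (hA : A.rank = d) (i : Fin m) : (lev A b x i + d / m) * thetaV A b x i ≤ 1 := by
  have h := mul_dotProduct_inv_sum_smul_vecMulVec_le_one
    (fun j => div_nonneg (add_nonneg (lev_nonneg hx hA j) hβ.le) (sq_nonneg (slack A b x j))) A
    ((isUnit_iff_isUnit_det _).mp (vaidyaMat_posDef hβ hx hA).isUnit) i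
  rw [thetaV, mul_div, ← div_mul_eq_mul_div]
  exact h

theorem mul_dotProduct_logHess_mulVec_le (hx : x ∈ interiorPoly A b) (hA : A.rank = d)
    (w : Fin d → ℝ) : d / m * (w ⬝ᵥ (logHess A b x *ᵥ w)) ≤ w ⬝ᵥ (vaidyaMat A b x *ᵥ w) := by
  rw [logHess, vaidyaMat, dotProduct_sum_smul_vecMulVec_mulVec,
    dotProduct_sum_smul_vecMulVec_mulVec, Finset.mul_sum]
  refine Finset.sum_le_sum fun j _ => ?_
  have := mul_nonneg (mul_nonneg (lev_nonneg hx hA j) (inv_nonneg.2 (sq_nonneg (slack A b x j))))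
    (mul_self_nonneg (A j ⬝ᵥ w))
  rw [div_eq_mul_inv _ (slack A b x j ^ 2)]
  nlinarith

theorem mul_thetaV_le_lev (hβ : 0 < (d : ℝ) / m) (hx : x ∈ interiorPoly A b)
    (hA : A.rank = d) (i : Fin m) : d / m * thetaV A b x i ≤ lev A b x i := by
  have h := (logHess_posDef hx hA).mul_dotProduct_inv_mulVec_le
    ((isUnit_iff_isUnit_det _).mp (vaidyaMat_posDef hβ hx hA).isUnit) hβ.le
    (mul_dotProduct_logHess_mulVec_le hx hA) (A i)
  rw [thetaV, lev, mul_div_assoc']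
  exact div_le_div_of_nonneg_right h (sq_nonneg _)

theorem thetaV_le_sqrt (hd : 0 < d) (hm : 0 < m) (hx : x ∈ interiorPoly A b)
    (hA : A.rank = d) (i : Fin m) : thetaV A b x i ≤ √((m : ℝ) / d) := by
  have hβ : 0 < (d : ℝ) / m := by positivity
  rw [← inv_div]
  exact le_sqrt_inv_of_add_mul_le_one hβ (thetaV_nonneg hβ hx hA i)
    (lev_add_mul_thetaV_le_one hβ hx hA i) (mul_thetaV_le_lev hβ hx hA i)

theorem sq_dotProduct_le_thetaV_mul (hβ : 0 < (d : ℝ) / m) (hx : x ∈ interiorPoly A b)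
    (hA : A.rank = d) (i : Fin m) (v : Fin d → ℝ) :
    (A i ⬝ᵥ v) ^ 2 ≤ thetaV A b x i * slack A b x i ^ 2 * (v ⬝ᵥ (vaidyaMat A b x *ᵥ v)) := by
  rw [thetaV, div_mul_cancel₀ _ (pow_pos (hx i) 2).ne']
  exact (vaidyaMat_posDef hβ hx hA).sq_dotProduct_le (A i) v

theorem lemma10_slackness_slowly_varying_general (d m : ℕ) (hd : 0 < d) (hdm : d ≤ m)
    (A : Matrix (Fin m) (Fin d) ℝ) (b : Fin m → ℝ) (hrank : A.rank = d)
    (x y : Fin d → ℝ) (hx : x ∈ interiorPoly A b) :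
    ∀ i, |1 - slack A b y i / slack A b x i| ≤
      ((m : ℝ) / d) ^ ((1 : ℝ) / 4) * vNorm A b x (x - y) := by
  intro i
  have hm : 0 < m := hd.trans_le hdm
  have hβ : 0 < (d : ℝ) / m := by positivity
  have hs : 0 < slack A b x i := hx i
  have hq : 0 ≤ (x - y) ⬝ᵥ (vaidyaMat A b x *ᵥ (x - y)) := by
    simpa using (vaidyaMat_posDef hβ hx hrank).posSemidef.dotProduct_mulVec_nonneg (x - y)
  have hfourth : (((m : ℝ) / d) ^ ((1 : ℝ) / 4)) ^ 2 = √((m : ℝ) / d) := by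
    rw [← Real.rpow_natCast, ← Real.rpow_mul (by positivity), Real.sqrt_eq_rpow]
    norm_num
  rw [vNorm, ← sq_le_sq₀ (abs_nonneg _) (mul_nonneg (by positivity) (Real.sqrt_nonneg _)),
    sq_abs, one_sub_div hs.ne', slack_sub_slack, div_pow, neg_sq, mul_pow, hfourth, Real.sq_sqrt hq,
    div_le_iff₀ (by positivity)]
  calc (A i ⬝ᵥ (x - y)) ^ 2
      ≤ thetaV A b x i * slack A b x i ^ 2 * ((x - y) ⬝ᵥ (vaidyaMat A b x *ᵥ (x - y))) :=
        sq_dotProduct_le_thetaV_mul hβ hx hrank i (x - y)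
    _ ≤ √((m : ℝ) / d) * slack A b x i ^ 2 * ((x - y) ⬝ᵥ (vaidyaMat A b x *ᵥ (x - y))) := by
        gcongr; exact thetaV_le_sqrt hd hm hx hrank i
    _ = _ := by ring

/-- Lemma 10: for all interior points `x, y` and every constraint `i`,
`|1 − s_{y,i}/s_{x,i}| ≤ (m/d)^{1/4} ‖x−y‖_{V_x}`. -/
theorem lemma10_slackness_slowly_varying (d m : ℕ) (hd : 0 < d) (hdm : d ≤ m)
    (A : Matrix (Fin m) (Fin d) ℝ) (b : Fin m → ℝ) (hrank : A.rank = d)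
    (x y : Fin d → ℝ) (hx : x ∈ interiorPoly A b) (hy : y ∈ interiorPoly A b) :
    ∀ i, |1 - slack A b y i / slack A b x i| ≤
      ((m : ℝ) / d) ^ ((1 : ℝ) / 4) * vNorm A b x (x - y) :=
  lemma10_slackness_slowly_varying_general d m hd hdm A b hrank x y hx

end PolytopeWalks
end
end

section
/- (Variance bound for the gradient of the Vaidya log-determinant) For every x in the interior of K, the vector g_x = A_x^⊤ (2Σ_x + β I_m − P_x^{(2)}) θ_x (which equals the gradient of x ↦ ½ log det V_x up to the stated identification) satisfies g_x^⊤ V_x^{-1} g_x ≤ 9 √(md). -/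
/-!
Write `M = A_x`, which has full column rank, `P = M (MᵀM)⁻¹ Mᵀ`, `w = σ + β` and
`V_x = Mᵀ diag(w) M`. Cauchy–Schwarz in the weights gives `(Mᵀu)ᵀ V_x⁻¹ (Mᵀu) ≤ Σ u_i² / w_i`
for every `u`. Taking `u = e_i` yields `w_i θ_i ≤ 1`; taking `u = P e_i` (so `Mᵀu = a_i / s_i`)
yields `β θ_i ≤ σ_i`; together `β θ_i² ≤ 1`, i.e. `θ_i ≤ √(m/d)`. Taking
`u = (2Σ + β − P^{(2)}) θ` bounds `g_xᵀ V_x⁻¹ g_x` by `Σ u_i² / w_i`, which is at most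
`5 Σ w_i θ_i²` because the rows and columns of `P^{(2)}` sum to `σ`. Finally
`Σ w_i θ_i = tr(V_x⁻¹ V_x) = d`, so `5 Σ w_i θ_i² ≤ 5 √(m/d) d = 5 √(md)`.
-/

open Matrix MeasureTheory Real Set
open scoped ENNReal

noncomputable section

namespace PolytopeWalks

/-- Rescaled constraint matrix `A_x = S_x⁻¹ A`. -/
def Amat {d m : ℕ} (A : Matrix (Fin m) (Fin d) ℝ) (b : Fin m → ℝ) (x : Fin d → ℝ) :
    Matrix (Fin m) (Fin d) ℝ :=
  Matrix.of fun i j => A i j / slack A b x i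

/-- The projection matrix `P_x = A_x (A_x^⊤ A_x)⁻¹ A_x^⊤` onto the column space of `A_x`. -/
def projMat {d m : ℕ} (A : Matrix (Fin m) (Fin d) ℝ) (b : Fin m → ℝ) (x : Fin d → ℝ) :
    Matrix (Fin m) (Fin m) ℝ :=
  Amat A b x * (logHess A b x)⁻¹ * (Amat A b x)ᵀ

/-- Entrywise (Hadamard) square of a matrix. -/
def hadSq {n : ℕ} (M : Matrix (Fin n) (Fin n) ℝ) : Matrix (Fin n) (Fin n) ℝ :=
  Matrix.of fun i j => (M i j) ^ 2

/-- The gradient of `x ↦ ½ log det V_x`: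
`g_x = A_x^⊤ (2Σ_x + β I − P_x^{(2)}) θ_x` with `β = d/m`. -/
def gradLogDetV {d m : ℕ} (A : Matrix (Fin m) (Fin d) ℝ) (b : Fin m → ℝ)
    (x : Fin d → ℝ) : Fin d → ℝ :=
  (Amat A b x)ᵀ *ᵥ
    (((2 : ℝ) • Matrix.diagonal (lev A b x) +
        ((d : ℝ) / m) • (1 : Matrix (Fin m) (Fin m) ℝ) - hadSq (projMat A b x)) *ᵥ
      thetaV A b x)


lemma mulVec_injective_of_rank_eq_card {ι n K : Type*} [Fintype ι] [Fintype n] [Field K]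
    {M : Matrix ι n K} (h : M.rank = Fintype.card n) : Function.Injective M.mulVec := by
  have hsum := M.mulVecLin.finrank_range_add_finrank_ker
  rwa [← Matrix.rank, h, Module.finrank_fintype_fun_eq_card, add_eq_left,
    Submodule.finrank_eq_zero, LinearMap.ker_eq_bot] at hsum

lemma mul_mul_transpose_apply {ι n : Type*} [Fintype n] (M : Matrix ι n ℝ)
    (N : Matrix n n ℝ) (i j : ι) : (M * N * Mᵀ) i j = M i ⬝ᵥ (N *ᵥ M j) := by
  rw [Matrix.mul_assoc]
  simp [mul_apply, dotProduct, mulVec]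

section OrthProj

variable {ι n : Type*} [Fintype ι] [Fintype n] [DecidableEq n]

def orthProj (M : Matrix ι n ℝ) : Matrix ι ι ℝ :=
  M * (Mᵀ * M)⁻¹ * Mᵀ

lemma orthProj_transpose (M : Matrix ι n ℝ) : (orthProj M)ᵀ = orthProj M := by
  rw [orthProj, transpose_mul, transpose_mul, transpose_transpose, transpose_nonsing_inv,
    transpose_mul, transpose_transpose, Matrix.mul_assoc]

variable {M : Matrix ι n ℝ}

lemma transpose_mul_orthProj (hM : Function.Injective M.mulVec) : Mᵀ * orthProj M = Mᵀ := by
  have hH : IsUnit (Mᵀ * M).det := (PosDef.conjTranspose_mul_self M hM).isUnit.map detMonoidHom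
  rw [orthProj, ← Matrix.mul_assoc, ← Matrix.mul_assoc, mul_nonsing_inv _ hH, Matrix.one_mul]

lemma orthProj_mul_self (hM : Function.Injective M.mulVec) :
    orthProj M * orthProj M = orthProj M := by
  change M * (Mᵀ * M)⁻¹ * Mᵀ * orthProj M = orthProj M
  rw [Matrix.mul_assoc, transpose_mul_orthProj hM]
  rfl

lemma sum_orthProj_sq (hM : Function.Injective M.mulVec) (i : ι) :
    ∑ j, orthProj M i j ^ 2 = orthProj M i i := by
  conv_rhs => rw [← orthProj_mul_self hM, mul_apply]
  refine Finset.sum_congr rfl fun j _ => ?_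
  rw [← transpose_apply (orthProj M) j i, orthProj_transpose, sq]

lemma orthProj_apply_self_nonneg (hM : Function.Injective M.mulVec) (i : ι) :
    0 ≤ orthProj M i i :=
  sum_orthProj_sq hM i ▸ Finset.sum_nonneg fun _ _ => sq_nonneg _

def vaidyaWeight (M : Matrix ι n ℝ) (c : ℝ) (i : ι) : ℝ :=
  orthProj M i i + c

lemma vaidyaWeight_pos (hM : Function.Injective M.mulVec) {c : ℝ} (hc : 0 < c) (i : ι) :
    0 < vaidyaWeight M c i :=
  add_pos_of_nonneg_of_pos (orthProj_apply_self_nonneg hM i) hc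

end OrthProj

section WeightedGram

variable {ι n : Type*} [Fintype ι] [DecidableEq ι] [Fintype n]

def weightedGram (M : Matrix ι n ℝ) (w : ι → ℝ) : Matrix n n ℝ :=
  Mᵀ * diagonal w * M

lemma dotProduct_weightedGram_mulVec (M : Matrix ι n ℝ) (w : ι → ℝ) (v : n → ℝ) :
    v ⬝ᵥ (weightedGram M w *ᵥ v) = ∑ i, w i * (M *ᵥ v) i ^ 2 := by
  rw [weightedGram, ← mulVec_mulVec, ← mulVec_mulVec, dotProduct_mulVec, vecMul_transpose]
  simp only [dotProduct, mulVec_diagonal]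
  exact Finset.sum_congr rfl fun i _ => by ring

variable {M : Matrix ι n ℝ} {w : ι → ℝ}

lemma weightedGram_posDef (hM : Function.Injective M.mulVec) (hw : ∀ i, 0 < w i) :
    (weightedGram M w).PosDef := by
  simpa [weightedGram, conjTranspose_eq_transpose_of_trivial] using
    (posDef_diagonal_iff.mpr hw).conjTranspose_mul_mul_same hM

variable [DecidableEq n]

lemma dotProduct_inv_weightedGram_mulVec_nonneg (hM : Function.Injective M.mulVec)
    (hw : ∀ i, 0 < w i) (v : n → ℝ) : 0 ≤ v ⬝ᵥ ((weightedGram M w)⁻¹ *ᵥ v) := by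
  simpa using (weightedGram_posDef hM hw).inv.posSemidef.dotProduct_mulVec_nonneg v

lemma dotProduct_inv_weightedGram_le (hM : Function.Injective M.mulVec) (hw : ∀ i, 0 < w i)
    (u : ι → ℝ) :
    (Mᵀ *ᵥ u) ⬝ᵥ ((weightedGram M w)⁻¹ *ᵥ (Mᵀ *ᵥ u)) ≤ ∑ i, u i ^ 2 / w i := by
  set z := (weightedGram M w)⁻¹ *ᵥ (Mᵀ *ᵥ u)
  set q := (Mᵀ *ᵥ u) ⬝ᵥ z with hq_def
  have hVz : weightedGram M w *ᵥ z = Mᵀ *ᵥ u := by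
    rw [mulVec_mulVec, mul_nonsing_inv _ ((weightedGram_posDef hM hw).isUnit.map detMonoidHom),
      one_mulVec]
  have hq : q = ∑ i, u i * (M *ᵥ z) i := by
    rw [hq_def, dotProduct_comm, dotProduct_mulVec, vecMul_transpose, dotProduct_comm]
    rfl
  have hq' : q = ∑ i, w i * (M *ᵥ z) i ^ 2 := by
    rw [hq_def, ← hVz, dotProduct_comm, dotProduct_weightedGram_mulVec]
  have hC : 0 ≤ ∑ i, u i ^ 2 / w i := Finset.sum_nonneg fun i _ => by have := hw i; positivity
  have hcs : q ^ 2 ≤ (∑ i, u i ^ 2 / w i) * q := by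
    conv_lhs => rw [hq]
    rw [hq']
    refine Finset.sum_sq_le_sum_mul_sum_of_sq_le_mul _ (fun i _ => ?_) (fun i _ => ?_)
      (fun i _ => le_of_eq ?_)
    · have := hw i; positivity
    · have := hw i; positivity
    · field_simp [(hw i).ne']
  nlinarith

lemma weight_mul_dotProduct_inv_weightedGram_le_one (hM : Function.Injective M.mulVec)
    (hw : ∀ i, 0 < w i) (i : ι) :
    w i * (M i ⬝ᵥ ((weightedGram M w)⁻¹ *ᵥ M i)) ≤ 1 := by
  have h := dotProduct_inv_weightedGram_le hM hw (Pi.single i 1)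
  simp only [mulVec_single_one, col_transpose, row] at h
  simp [Pi.single_apply, ite_div] at h
  rwa [← le_div_iff₀' (hw i), one_div]

lemma mul_dotProduct_inv_weightedGram_le_orthProj (hM : Function.Injective M.mulVec)
    (hw : ∀ i, 0 < w i) {c : ℝ} (hc : 0 < c) (hcw : ∀ i, c ≤ w i) (i : ι) :
    c * (M i ⬝ᵥ ((weightedGram M w)⁻¹ *ᵥ M i)) ≤ orthProj M i i := by
  have h := dotProduct_inv_weightedGram_le hM hw (orthProj M *ᵥ Pi.single i 1)
  rw [mulVec_mulVec, transpose_mul_orthProj hM, mulVec_single_one, col_transpose] at h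
  rw [← le_div_iff₀' hc]
  calc _ ≤ _ := h
    _ ≤ ∑ j, orthProj M i j ^ 2 / c := by
      refine Finset.sum_le_sum fun j _ => ?_
      rw [mulVec_single_one, col_apply, ← transpose_apply (orthProj M), orthProj_transpose]
      exact div_le_div_of_nonneg_left (sq_nonneg _) hc (hcw j)
    _ = orthProj M i i / c := by rw [← Finset.sum_div, sum_orthProj_sq hM]

lemma sum_weight_mul_dotProduct_inv_weightedGram (hM : Function.Injective M.mulVec)
    (hw : ∀ i, 0 < w i) :
    ∑ i, w i * (M i ⬝ᵥ ((weightedGram M w)⁻¹ *ᵥ M i)) = Fintype.card n := by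
  calc ∑ i, w i * (M i ⬝ᵥ ((weightedGram M w)⁻¹ *ᵥ M i))
      = trace (diagonal w * (M * (weightedGram M w)⁻¹ * Mᵀ)) := by
        simp [trace, diagonal_mul, mul_mul_transpose_apply]
    _ = trace (Mᵀ * (diagonal w * M * (weightedGram M w)⁻¹)) := by
        rw [← trace_mul_comm (diagonal w * M * (weightedGram M w)⁻¹)]
        simp only [Matrix.mul_assoc]
    _ = trace (weightedGram M w * (weightedGram M w)⁻¹) := by
        simp only [weightedGram, Matrix.mul_assoc]
    _ = Fintype.card n := by
        rw [mul_nonsing_inv _ ((weightedGram_posDef hM hw).isUnit.map detMonoidHom), trace_one]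

end WeightedGram

lemma sq_sum_sq_mul_le {ι : Type*} [Fintype ι] (p θ : ι → ℝ) :
    (∑ j, p j ^ 2 * θ j) ^ 2 ≤ (∑ j, p j ^ 2) * ∑ j, p j ^ 2 * θ j ^ 2 :=
  Finset.sum_sq_le_sum_mul_sum_of_sq_le_mul _ (fun j _ => sq_nonneg _)
    (fun j _ => mul_nonneg (sq_nonneg _) (sq_nonneg _)) fun j _ => le_of_eq (by ring)

lemma sq_sub_div_le {ι : Type*} [Fintype ι] (p θ : ι → ℝ) (hθ : ∀ j, 0 ≤ θ j) {t β : ℝ}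
    (ht : 0 ≤ t) (hβ : 0 < β) :
    ((2 * ∑ j, p j ^ 2 + β) * t - ∑ j, p j ^ 2 * θ j) ^ 2 / (∑ j, p j ^ 2 + β) ≤
      4 * ((∑ j, p j ^ 2 + β) * t ^ 2) + ∑ j, p j ^ 2 * θ j ^ 2 := by
  set σ := ∑ j, p j ^ 2
  set r := ∑ j, p j ^ 2 * θ j
  set R := ∑ j, p j ^ 2 * θ j ^ 2
  have hσ : 0 ≤ σ := Finset.sum_nonneg fun j _ => sq_nonneg _
  have ha : ((2 * σ + β) * t) ^ 2 ≤ 4 * ((σ + β) * t ^ 2) * (σ + β) := by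
    have : (2 * σ + β) ^ 2 ≤ (2 * (σ + β)) ^ 2 :=
      pow_le_pow_left₀ (by positivity) (by linarith) 2
    calc ((2 * σ + β) * t) ^ 2 = (2 * σ + β) ^ 2 * t ^ 2 := by ring
      _ ≤ (2 * (σ + β)) ^ 2 * t ^ 2 := by gcongr
      _ = _ := by ring
  have hr : r ^ 2 ≤ R * (σ + β) := by
    have hR : 0 ≤ R := Finset.sum_nonneg fun j _ => by positivity
    calc r ^ 2 ≤ σ * R := sq_sum_sq_mul_le p θ
      _ ≤ R * (σ + β) := by nlinarith
  have har : 0 ≤ (2 * σ + β) * t * r :=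
    mul_nonneg (by positivity) (Finset.sum_nonneg fun j _ => by have := hθ j; positivity)
  rw [div_le_iff₀ (by positivity)]
  nlinarith

lemma sum_sq_div_le_five_mul {ι : Type*} [Fintype ι] {P : Matrix ι ι ℝ} (hP : Pᵀ = P)
    {σ θ : ι → ℝ} (hσ : ∀ i, ∑ j, P i j ^ 2 = σ i) (hθ : ∀ i, 0 ≤ θ i) {β : ℝ} (hβ : 0 < β) :
    ∑ i, ((2 * σ i + β) * θ i - ∑ j, P i j ^ 2 * θ j) ^ 2 / (σ i + β) ≤
      5 * ∑ i, (σ i + β) * θ i ^ 2 := by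
  have hpoint (i : ι) : ((2 * σ i + β) * θ i - ∑ j, P i j ^ 2 * θ j) ^ 2 / (σ i + β) ≤
      4 * ((σ i + β) * θ i ^ 2) + ∑ j, P i j ^ 2 * θ j ^ 2 :=
    hσ i ▸ sq_sub_div_le (P i) θ hθ (hθ i) hβ
  have hcol (j : ι) : ∑ i, P i j ^ 2 = σ j := by
    rw [← hσ j]
    exact Finset.sum_congr rfl fun i _ => by rw [← transpose_apply P j i, hP]
  calc _ ≤ ∑ i, (4 * ((σ i + β) * θ i ^ 2) + ∑ j, P i j ^ 2 * θ j ^ 2) :=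
        Finset.sum_le_sum fun i _ => hpoint i
    _ = 4 * ∑ i, (σ i + β) * θ i ^ 2 + ∑ j, σ j * θ j ^ 2 := by
        rw [Finset.sum_add_distrib, ← Finset.mul_sum, Finset.sum_comm]
        simp only [← Finset.sum_mul, hcol]
    _ ≤ 5 * ∑ i, (σ i + β) * θ i ^ 2 := by
        have : ∑ j, σ j * θ j ^ 2 ≤ ∑ i, (σ i + β) * θ i ^ 2 :=
          Finset.sum_le_sum fun j _ => by nlinarith [sq_nonneg (θ j)]
        linarith

lemma mulVec_two_smul_diagonal_add_smul_one_sub_hadamard {ι : Type*} [Fintype ι] [DecidableEq ι]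
    (P : Matrix ι ι ℝ) (σ θ : ι → ℝ) (c : ℝ) :
    ((2 : ℝ) • diagonal σ + c • 1 - P ⊙ P) *ᵥ θ =
      fun i => (2 * σ i + c) * θ i - ∑ j, P i j ^ 2 * θ j := by
  ext i
  simp only [sub_mulVec, add_mulVec, smul_mulVec, one_mulVec, Pi.sub_apply, Pi.add_apply,
    Pi.smul_apply, mulVec_diagonal, smul_eq_mul]
  simp only [mulVec, dotProduct, hadamard_apply, sq]
  ring

section Vaidya

variable {ι n : Type*} [Fintype ι] [DecidableEq ι] [Fintype n] [DecidableEq n]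

def vaidyaTheta (M : Matrix ι n ℝ) (c : ℝ) (i : ι) : ℝ :=
  M i ⬝ᵥ ((weightedGram M (vaidyaWeight M c))⁻¹ *ᵥ M i)

def vaidyaGrad (M : Matrix ι n ℝ) (c : ℝ) : n → ℝ :=
  Mᵀ *ᵥ (((2 : ℝ) • diagonal (fun i => orthProj M i i) + c • 1 - orthProj M ⊙ orthProj M) *ᵥ
    vaidyaTheta M c)

variable {M : Matrix ι n ℝ} {c : ℝ}

lemma vaidyaTheta_nonneg (hM : Function.Injective M.mulVec) (hc : 0 < c) (i : ι) :
    0 ≤ vaidyaTheta M c i :=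
  dotProduct_inv_weightedGram_mulVec_nonneg hM (vaidyaWeight_pos hM hc) _

lemma vaidyaTheta_sq_le (hM : Function.Injective M.mulVec) (hc : 0 < c) (i : ι) :
    vaidyaTheta M c i ^ 2 ≤ c⁻¹ := by
  have hw := vaidyaWeight_pos hM hc
  have hθ := vaidyaTheta_nonneg hM hc i
  have hθw : vaidyaWeight M c i * vaidyaTheta M c i ≤ 1 :=
    weight_mul_dotProduct_inv_weightedGram_le_one hM hw i
  have hθσ : c * vaidyaTheta M c i ≤ orthProj M i i :=
    mul_dotProduct_inv_weightedGram_le_orthProj hM hw hc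
      (fun j => le_add_of_nonneg_left (orthProj_apply_self_nonneg hM j)) i
  rw [vaidyaWeight] at hθw
  -- `c θ² ≤ σ θ = w θ - c θ ≤ 1`
  rw [← one_div, le_div_iff₀' hc]
  nlinarith [mul_le_mul_of_nonneg_right hθσ hθ]

lemma sum_vaidyaWeight_mul_vaidyaTheta_sq_le (hM : Function.Injective M.mulVec) (hc : 0 < c) :
    ∑ i, vaidyaWeight M c i * vaidyaTheta M c i ^ 2 ≤ √c⁻¹ * Fintype.card n := by
  have hθ (i : ι) : vaidyaTheta M c i ≤ √c⁻¹ :=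
    Real.le_sqrt_of_sq_le (vaidyaTheta_sq_le hM hc i)
  calc ∑ i, vaidyaWeight M c i * vaidyaTheta M c i ^ 2
      ≤ ∑ i, √c⁻¹ * (vaidyaWeight M c i * vaidyaTheta M c i) := by
        refine Finset.sum_le_sum fun i _ => ?_
        have hwθ := mul_nonneg (vaidyaWeight_pos hM hc i).le (vaidyaTheta_nonneg hM hc i)
        nlinarith [mul_nonneg hwθ (sub_nonneg.2 (hθ i))]
    _ = √c⁻¹ * Fintype.card n := by
        rw [← Finset.mul_sum]
        congr 1
        exact sum_weight_mul_dotProduct_inv_weightedGram hM (vaidyaWeight_pos hM hc)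

theorem vaidyaGrad_dotProduct_inv_weightedGram_le (hM : Function.Injective M.mulVec)
    (hc : 0 < c) :
    vaidyaGrad M c ⬝ᵥ ((weightedGram M (vaidyaWeight M c))⁻¹ *ᵥ vaidyaGrad M c) ≤
      5 * (√c⁻¹ * Fintype.card n) := by
  calc _ ≤ ∑ i, ((2 * orthProj M i i + c) * vaidyaTheta M c i -
        ∑ j, orthProj M i j ^ 2 * vaidyaTheta M c j) ^ 2 / vaidyaWeight M c i := by
        rw [vaidyaGrad, mulVec_two_smul_diagonal_add_smul_one_sub_hadamard]
        exact dotProduct_inv_weightedGram_le hM (vaidyaWeight_pos hM hc) _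
    _ ≤ 5 * ∑ i, vaidyaWeight M c i * vaidyaTheta M c i ^ 2 :=
        sum_sq_div_le_five_mul (orthProj_transpose M) (sum_orthProj_sq hM)
          (vaidyaTheta_nonneg hM hc) hc
    _ ≤ 5 * (√c⁻¹ * Fintype.card n) := by
        gcongr
        exact sum_vaidyaWeight_mul_vaidyaTheta_sq_le hM hc

end Vaidya

section Polytope

variable {d m : ℕ} (A : Matrix (Fin m) (Fin d) ℝ) (b : Fin m → ℝ) (x : Fin d → ℝ)

lemma Amat_row (i : Fin m) : Amat A b x i = (slack A b x i)⁻¹ • A i := by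
  ext j
  simp [Amat, div_eq_inv_mul]

lemma Amat_mulVec_apply (v : Fin d → ℝ) (i : Fin m) :
    (Amat A b x *ᵥ v) i = (slack A b x i)⁻¹ * (A *ᵥ v) i := by
  simp only [mulVec, Amat_row, smul_dotProduct, smul_eq_mul]

lemma Amat_mulVec_injective (hx : x ∈ interiorPoly A b) (hrank : A.rank = d) :
    Function.Injective (Amat A b x).mulVec := by
  intro v w h
  refine mulVec_injective_of_rank_eq_card (by simpa using hrank) (funext fun i => ?_)
  refine mul_left_cancel₀ (inv_ne_zero (hx i).ne') ?_
  rw [← Amat_mulVec_apply, ← Amat_mulVec_apply, h]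

lemma logHess_eq : logHess A b x = (Amat A b x)ᵀ * Amat A b x := by
  ext j k
  simp only [logHess, mul_apply, Amat, Matrix.sum_apply, Matrix.smul_apply, vecMulVec_apply,
    transpose_apply, of_apply, smul_eq_mul]
  exact Finset.sum_congr rfl fun _ _ => by ring

lemma projMat_eq : projMat A b x = orthProj (Amat A b x) := by
  rw [projMat, logHess_eq]
  rfl

lemma dotProduct_mulVec_div_slack_sq (N : Matrix (Fin d) (Fin d) ℝ) (i : Fin m) :
    A i ⬝ᵥ (N *ᵥ A i) / slack A b x i ^ 2 = Amat A b x i ⬝ᵥ (N *ᵥ Amat A b x i) := by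
  rw [Amat_row, smul_dotProduct, mulVec_smul, dotProduct_smul, smul_eq_mul, smul_eq_mul]
  ring

lemma lev_eq : lev A b x = fun i => orthProj (Amat A b x) i i := by
  ext i
  rw [lev, dotProduct_mulVec_div_slack_sq, logHess_eq, orthProj, mul_mul_transpose_apply]

lemma vaidyaMat_eq :
    vaidyaMat A b x = weightedGram (Amat A b x) (vaidyaWeight (Amat A b x) (d / m)) := by
  have hw : vaidyaWeight (Amat A b x) (d / m) = fun i => lev A b x i + d / m := by
    rw [lev_eq]
    rfl
  rw [hw, weightedGram, Matrix.mul_assoc]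
  ext j k
  rw [mul_apply]
  simp only [vaidyaMat, diagonal_mul, Amat, Matrix.sum_apply, Matrix.smul_apply, vecMulVec_apply,
    transpose_apply, of_apply, smul_eq_mul]
  exact Finset.sum_congr rfl fun _ _ => by ring

lemma thetaV_eq : thetaV A b x = vaidyaTheta (Amat A b x) (d / m) := by
  ext i
  rw [thetaV, dotProduct_mulVec_div_slack_sq, vaidyaMat_eq]
  rfl

lemma hadSq_eq_hadamard {n : ℕ} (P : Matrix (Fin n) (Fin n) ℝ) : hadSq P = P ⊙ P := by
  ext
  simp [hadSq, sq]

lemma gradLogDetV_eq : gradLogDetV A b x = vaidyaGrad (Amat A b x) (d / m) := by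
  rw [gradLogDetV, vaidyaGrad, lev_eq, projMat_eq, thetaV_eq, hadSq_eq_hadamard]

end Polytope

/-- Variance bound for the gradient of the Vaidya log-determinant:
`g_x^⊤ V_x⁻¹ g_x ≤ 9 √(md)` for every interior point `x`. -/
theorem gradient_logdet_variance_bound (d m : ℕ) (hd : 0 < d) (hdm : d ≤ m)
    (A : Matrix (Fin m) (Fin d) ℝ) (b : Fin m → ℝ) (hrank : A.rank = d)
    (x : Fin d → ℝ) (hx : x ∈ interiorPoly A b) :
    gradLogDetV A b x ⬝ᵥ ((vaidyaMat A b x)⁻¹ *ᵥ gradLogDetV A b x) ≤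
      9 * Real.sqrt ((m : ℝ) * d) := by
  have hβ : (0 : ℝ) < d / m := by
    have : 0 < m := hd.trans_le hdm
    positivity
  have hbound := vaidyaGrad_dotProduct_inv_weightedGram_le (Amat_mulVec_injective A b x hx hrank) hβ
  rw [Fintype.card_fin] at hbound
  have hsqrt : √((d : ℝ) / m)⁻¹ * d ≤ √((m : ℝ) * d) := by
    refine Real.le_sqrt_of_sq_le (le_of_eq ?_)
    rw [mul_pow, Real.sq_sqrt (by positivity), inv_div]
    field_simp
  rw [gradLogDetV_eq, vaidyaMat_eq]
  calc _ ≤ 5 * (√((d : ℝ) / m)⁻¹ * d) := hbound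
    _ ≤ 5 * √((m : ℝ) * d) := by gcongr
    _ ≤ 9 * √((m : ℝ) * d) := by linarith [Real.sqrt_nonneg ((m : ℝ) * d)]

end PolytopeWalks
end
end
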